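/- arXiv:1107.2321 — 3 statements merged into one kernel-verified Lean document; each statement's English description precedes it below -/
import Mathlib

section
/- Let K be a number field with ring of integers O_K, 𝔭 a nonzero prime ideal, r ∈ O_K, and J := (y − r, 𝔭) the ideal of O_K[y] generated by y − r and the elements of 𝔭. Then for any z ≥ 1, the quotient ring O_K[y]/J^z is finite with cardinality at most N(𝔭)^{z(z+1)/2}, where N(𝔭) = |O_K/𝔭|. -/
/-!
Every class modulo `J ^ z` has a representative `∑_{i<z} c_i (X - r)^i` (Taylor expansion at `r`
of the remainder modulo the monic `(X - r)^z`), and since `𝔭^(z-i) (X - r)^i ⊆ J^z`, the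
coefficient `c_i` only matters modulo `𝔭^(z-i)`. Hence `𝓞 K[X]/J^z` is the image of
`∏_{i<z} 𝓞 K/𝔭^(z-i)`, of cardinality `N(𝔭)^(z + (z-1) + ⋯ + 1)`.
-/

open NumberField Polynomial

theorem Finset.sum_range_sub_eq_mul_succ_div_two (z : ℕ) :
    ∑ i ∈ Finset.range z, (z - i) = z * (z + 1) / 2 := by
  have reflect : ∑ i ∈ Finset.range z, (z - i) = ∑ i ∈ Finset.range z, (i + 1) := by
    rw [← Finset.sum_range_reflect]
    exact Finset.sum_congr rfl fun i hi => by have := Finset.mem_range.mp hi; omega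
  rw [reflect, ← add_zero (∑ i ∈ Finset.range z, (i + 1)), ← Finset.sum_range_succ' (fun i => i),
    Finset.sum_range_id, Nat.add_sub_cancel, mul_comm]

namespace Polynomial

variable {R : Type*} [CommRing R]

theorem exists_eq_sum_C_mul_X_sub_C_pow_add_mul (f : R[X]) (r : R) (z : ℕ) :
    ∃ c : Fin z → R, ∃ q : R[X],
      f = ∑ i : Fin z, C (c i) * (X - C r) ^ (i : ℕ) + (X - C r) ^ z * q := by
  nontriviality R
  set m := (X - C r) ^ z
  have hm : m.Monic := (monic_X_sub_C r).pow z
  have hdeg : (taylor r (f %ₘ m)).degree < z := by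
    rw [degree_taylor]
    calc (f %ₘ m).degree < m.degree := degree_modByMonic_lt f hm
      _ = z := by simp [m, degree_pow']
  refine ⟨fun i => (taylor r (f %ₘ m)).coeff i, f /ₘ m, ?_⟩
  rw [sum_fin (fun i a => C a * (X - C r) ^ i) (fun i => by simp) hdeg, sum_taylor_eq,
    modByMonic_add_div]

variable {𝔭 : Ideal R} {r : R} {J : Ideal R[X]}

theorem C_mul_X_sub_C_pow_mem_pow (hX : X - C r ∈ J) (hC : 𝔭.map C ≤ J) {i z : ℕ} (hi : i ≤ z)
    {d : R} (hd : d ∈ 𝔭 ^ (z - i)) : C d * (X - C r) ^ i ∈ J ^ z := by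
  have hCd : C d ∈ J ^ (z - i) :=
    Ideal.pow_right_mono hC _ (Ideal.map_pow C 𝔭 _ ▸ Ideal.mem_map_of_mem C hd)
  simpa [← pow_add, Nat.sub_add_cancel hi] using Ideal.mul_mem_mul hCd (Ideal.pow_mem_pow hX i)

theorem exists_surjective_pi_quotient_pow (hX : X - C r ∈ J) (hC : 𝔭.map C ≤ J) (z : ℕ) :
    ∃ F : (∀ i : Fin z, R ⧸ 𝔭 ^ (z - i)) → R[X] ⧸ J ^ z, Function.Surjective F := by
  let F : (∀ i : Fin z, R ⧸ 𝔭 ^ (z - i)) → R[X] ⧸ J ^ z := fun a =>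
    Ideal.Quotient.mk _ (∑ i, C (a i).out * (X - C r) ^ (i : ℕ))
  have F_mk (c : Fin z → R) : F (fun i => Ideal.Quotient.mk _ (c i)) =
      Ideal.Quotient.mk _ (∑ i, C (c i) * (X - C r) ^ (i : ℕ)) := by
    refine Ideal.Quotient.eq.mpr ?_
    rw [← Finset.sum_sub_distrib]
    refine Ideal.sum_mem _ fun i _ => ?_
    rw [← sub_mul, ← C_sub]
    exact C_mul_X_sub_C_pow_mem_pow hX hC i.2.le (Ideal.Quotient.eq.mp (Quotient.out_eq' _))
  refine ⟨F, fun q => ?_⟩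
  obtain ⟨f, rfl⟩ := Ideal.Quotient.mk_surjective q
  obtain ⟨c, p, rfl⟩ := exists_eq_sum_C_mul_X_sub_C_pow_add_mul f r z
  refine ⟨fun i => Ideal.Quotient.mk _ (c i), ?_⟩
  rw [F_mk, map_add, Ideal.Quotient.eq_zero_iff_mem.mpr
    (Ideal.mul_mem_right p _ (Ideal.pow_mem_pow hX z)), add_zero]

end Polynomial

theorem quotient_pow_ideal_finite_card_le_general
    (K : Type*) [Field K] [NumberField K]
    (𝔭 : Ideal (𝓞 K)) (hne : 𝔭 ≠ ⊥) (r : 𝓞 K) (z : ℕ) :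
    Finite (Polynomial (𝓞 K) ⧸
      (Ideal.span ({X - C r} ∪ C '' (𝔭 : Set (𝓞 K))) : Ideal (Polynomial (𝓞 K))) ^ z) ∧
    Nat.card (Polynomial (𝓞 K) ⧸
      (Ideal.span ({X - C r} ∪ C '' (𝔭 : Set (𝓞 K))) : Ideal (Polynomial (𝓞 K))) ^ z) ≤
      (Ideal.absNorm 𝔭) ^ (z * (z + 1) / 2) := by
  set J : Ideal (𝓞 K)[X] := Ideal.span ({X - C r} ∪ C '' (𝔭 : Set (𝓞 K)))
  obtain ⟨F, hF⟩ := exists_surjective_pi_quotient_pow (𝔭 := 𝔭) (J := J)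
    (Ideal.subset_span (Or.inl rfl))
    (Ideal.map_le_iff_le_comap.mpr fun x hx => Ideal.subset_span (Or.inr ⟨x, hx, rfl⟩)) z
  have card_quotient_pow (k : ℕ) : Nat.card (𝓞 K ⧸ 𝔭 ^ k) = Ideal.absNorm 𝔭 ^ k := by
    rw [← map_pow, Ideal.absNorm_apply, Submodule.cardQuot_apply]
  have (k : ℕ) : Finite (𝓞 K ⧸ 𝔭 ^ k) := (Ideal.absNorm_ne_zero_iff _).mp <| by
    rw [map_pow]; exact pow_ne_zero k (Ideal.absNorm_eq_zero_iff.not.mpr hne)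
  refine ⟨Finite.of_surjective F hF, ?_⟩
  calc Nat.card ((𝓞 K)[X] ⧸ J ^ z) ≤ Nat.card (∀ i : Fin z, 𝓞 K ⧸ 𝔭 ^ (z - i)) :=
        Nat.card_le_card_of_surjective F hF
    _ = ∏ i : Fin z, Ideal.absNorm 𝔭 ^ (z - i) := by simp only [Nat.card_pi, card_quotient_pow]
    _ = Ideal.absNorm 𝔭 ^ (z * (z + 1) / 2) := by
        rw [Finset.prod_pow_eq_pow_sum, Fin.sum_univ_eq_sum_range (fun i => z - i),
          Finset.sum_range_sub_eq_mul_succ_div_two]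

/-- Let `𝔭` be a nonzero prime ideal of `𝓞 K`, `r ∈ 𝓞 K`, and
`J := (y − r, 𝔭)` the ideal of `𝓞 K[y]` generated by `y − r` and the elements of `𝔭`.
Then for any `z ≥ 1`, the quotient `𝓞 K[y]/J^z` is finite with cardinality at most
`N(𝔭)^(z(z+1)/2)`, where `N(𝔭) = |𝓞 K/𝔭|` is the absolute norm. -/
theorem quotient_pow_ideal_finite_card_le
    (K : Type*) [Field K] [NumberField K]
    (𝔭 : Ideal (𝓞 K)) (hprime : 𝔭.IsPrime) (hne : 𝔭 ≠ ⊥) (r : 𝓞 K) (z : ℕ) (hz : 1 ≤ z) :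
    Finite (Polynomial (𝓞 K) ⧸
      (Ideal.span ({X - C r} ∪ C '' (𝔭 : Set (𝓞 K))) : Ideal (Polynomial (𝓞 K))) ^ z) ∧
    Nat.card (Polynomial (𝓞 K) ⧸
      (Ideal.span ({X - C r} ∪ C '' (𝔭 : Set (𝓞 K))) : Ideal (Polynomial (𝓞 K))) ^ z) ≤
      (Ideal.absNorm 𝔭) ^ (z * (z + 1) / 2) :=
  quotient_pow_ideal_finite_card_le_general K 𝔭 hne r z
end

section
/- Let K be a number field of degree d with T₂-norm ‖·‖, let 𝔭₁,…,𝔭_n be distinct nonzero primes of O_K, let zᵢ ≥ 0 be integers, rᵢ ∈ O_K, and let c ∈ ∏ᵢ J_i^{zᵢ} (with J_i = (y − rᵢ, 𝔭ᵢ)) be a polynomial such that ‖c(m)‖ < F whenever ‖m‖ ≤ B. Then any m ∈ O_K with ‖m‖ ≤ B whose agreement weights aᵢ (aᵢ = 1 if m ≡ rᵢ mod 𝔭ᵢ, else 0) satisfy Σᵢ aᵢ·zᵢ·log N(𝔭ᵢ) > −(d/2)·log d + d·log F is a root of c, i.e. c(m) = 0. -/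
open NumberField Polynomial

open scoped Classical

/-!
Evaluating at `m` maps `J i = (y - r i, 𝔭 i)` into `𝔭 i` whenever `m ≡ r i mod 𝔭 i`, so `c(m)` lies
in `∏ i, 𝔭 i ^ (a i * z i)` and, if nonzero, has ideal norm at least `∏ i, N(𝔭 i) ^ (a i * z i)`.
On the other hand `|N(c(m))| = ∏_φ |φ (c(m))|`, and AM-GM bounds this product by
`(‖c(m)‖² / d) ^ (d / 2) < (F² / d) ^ (d / 2)`. The hypothesis on the weights says that the first
bound exceeds the second.
-/

open Real Finset Module

namespace Polynomial

variable {R : Type*} [CommRing R]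

theorem map_evalRingHom_span_le_of_sub_mem {P : Ideal R} {r m : R} (h : m - r ∈ P) :
    (Ideal.span ({X - C r} ∪ C '' (P : Set R))).map (evalRingHom m) ≤ P := by
  rw [Ideal.map_span, Ideal.span_le, Set.image_union, Set.image_singleton,
    Set.union_subset_iff, Set.singleton_subset_iff, Set.image_image]
  refine ⟨by simpa using h, ?_⟩
  rintro _ ⟨p, hp, rfl⟩
  simpa using hp

theorem eval_mem_prod_pow_of_mem_prod_span_pow {ι : Type*} (s : Finset ι) (P : ι → Ideal R)
    (r : ι → R) (z : ι → ℕ) {c : R[X]}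
    (hc : c ∈ ∏ i ∈ s, Ideal.span ({X - C (r i)} ∪ C '' (P i : Set R)) ^ z i) (m : R) :
    c.eval m ∈ ∏ i ∈ s, P i ^ (if m - r i ∈ P i then z i else 0) := by
  suffices hle : (∏ i ∈ s, Ideal.span ({X - C (r i)} ∪ C '' (P i : Set R)) ^ z i).map
      (evalRingHom m) ≤ ∏ i ∈ s, P i ^ (if m - r i ∈ P i then z i else 0) from
    hle (Ideal.mem_map_of_mem _ hc)
  rw [← Ideal.mapHom_apply, map_prod]
  refine Finset.prod_le_prod' fun i _ => ?_
  rw [Ideal.mapHom_apply, Ideal.map_pow]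
  split_ifs with hi
  · exact Ideal.pow_right_mono (map_evalRingHom_span_le_of_sub_mem hi) _
  · simp

end Polynomial

theorem Ideal.sum_mul_log_absNorm_le_log_absNorm {S : Type*} [CommRing S] [IsDedekindDomain S]
    [Module.Free ℤ S] [Module.Finite ℤ S] {ι : Type*} (s : Finset ι) (P : ι → Ideal S)
    (e : ι → ℕ) {x : S} (hx : x ≠ 0) (h : x ∈ ∏ i ∈ s, P i ^ e i) :
    ∑ i ∈ s, (e i : ℝ) * log (absNorm (P i)) ≤ log (absNorm (span {x})) := by
  have hdvd : ∏ i ∈ s, absNorm (P i) ^ e i ∣ absNorm (span {x}) := by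
    simpa only [map_prod, map_pow] using
      absNorm_dvd_absNorm_of_le ((span_singleton_le_iff_mem _).mpr h)
  have hN : absNorm (span {x}) ≠ 0 := by
    rwa [Ne, absNorm_eq_zero_iff, span_singleton_eq_bot]
  have hprod : ∏ i ∈ s, absNorm (P i) ^ e i ≠ 0 := ne_zero_of_dvd_ne_zero hN hdvd
  calc ∑ i ∈ s, (e i : ℝ) * log (absNorm (P i))
      = log ((∏ i ∈ s, absNorm (P i) ^ e i : ℕ) : ℝ) := by
        rw [Nat.cast_prod, log_prod fun i hi => by
          exact_mod_cast (Finset.prod_ne_zero_iff.mp hprod) i hi]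
        simp only [Nat.cast_pow, log_pow]
    _ ≤ log (absNorm (span {x})) := by
        apply log_le_log
        · exact_mod_cast Nat.pos_of_ne_zero hprod
        · exact_mod_cast Nat.le_of_dvd (Nat.pos_of_ne_zero hN) hdvd

namespace NumberField

variable {K : Type*} [Field K] [NumberField K]

noncomputable def t2Norm (x : K) : ℝ := √(∑ φ : K →+* ℂ, ‖φ x‖ ^ 2)

theorem prod_norm_embeddings_eq_abs_norm (x : K) :
    ∏ φ : K →+* ℂ, ‖φ x‖ = |(Algebra.norm ℚ x : ℝ)| := by
  rw [← Fintype.prod_equiv (RingHom.equivRatAlgHom K ℂ).symm (fun σ => ‖σ x‖) _ fun _ => rfl,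
    ← norm_prod, ← Algebra.norm_eq_prod_embeddings, eq_ratCast, Complex.norm_ratCast]

theorem finrank_mul_abs_norm_rpow_le (x : K) :
    (finrank ℚ K : ℝ) * |(Algebra.norm ℚ x : ℝ)| ^ (2 / finrank ℚ K : ℝ) ≤
      ∑ φ : K →+* ℂ, ‖φ x‖ ^ 2 := by
  set d := finrank ℚ K
  have hd : (0 : ℝ) < d := by exact_mod_cast finrank_pos
  have hcard : Fintype.card (K →+* ℂ) = d := Embeddings.card K ℂ
  have amgm := geom_mean_le_arith_mean_weighted univ (fun _ => (d : ℝ)⁻¹)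
    (fun φ : K →+* ℂ => ‖φ x‖ ^ 2) (fun _ _ => by positivity)
    (by simp [hcard, hd.ne']) (fun _ _ => by positivity)
  rw [← mul_sum, finsetProd_rpow _ _ fun _ _ => by positivity, prod_pow,
    prod_norm_embeddings_eq_abs_norm, ← rpow_natCast, ← rpow_mul (abs_nonneg _), Nat.cast_ofNat,
    ← div_eq_mul_inv] at amgm
  exact (le_inv_mul_iff₀ hd).mp amgm

theorem log_abs_norm_lt_of_t2Norm_lt {x : K} (hx : x ≠ 0) {F : ℝ} (hF : t2Norm x < F) :
    log |(Algebra.norm ℚ x : ℝ)| <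
      -(finrank ℚ K : ℝ) / 2 * log (finrank ℚ K) + finrank ℚ K * log F := by
  set d := finrank ℚ K
  have hd : (0 : ℝ) < d := by exact_mod_cast finrank_pos
  have hN : 0 < |(Algebra.norm ℚ x : ℝ)| := by simpa using hx
  have hFpos : 0 < F := (sqrt_nonneg _).trans_lt hF
  have hsq : ∑ φ : K →+* ℂ, ‖φ x‖ ^ 2 < F ^ 2 := (sqrt_lt' hFpos).mp hF
  have hlog := log_lt_log (by positivity) ((finrank_mul_abs_norm_rpow_le x).trans_lt hsq)
  rw [log_mul hd.ne' (by positivity), log_rpow hN, log_pow] at hlog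
  have hsplit : log |(Algebra.norm ℚ x : ℝ)| =
      d / 2 * (2 / d * log |(Algebra.norm ℚ x : ℝ)|) := by
    field_simp
  rw [hsplit]
  push_cast at hlog
  nlinarith

theorem absNorm_span_singleton_eq_abs_norm (x : 𝓞 K) :
    (Ideal.absNorm (Ideal.span {x}) : ℝ) = |(Algebra.norm ℚ (x : K) : ℝ)| := by
  rw [Ideal.absNorm_span_singleton, ← Algebra.coe_norm_int, Nat.cast_natAbs]
  push_cast
  rfl

end NumberField

theorem eval_eq_zero_of_weighted_agreement_general
    (K : Type*) [Field K] [NumberField K]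
    (n : ℕ) (𝔭 : Fin n → Ideal (𝓞 K))
    (r : Fin n → 𝓞 K) (z : Fin n → ℕ) (B F : ℝ)
    (c : Polynomial (𝓞 K))
    (hc : c ∈ ∏ i, (Ideal.span ({X - C (r i)} ∪ C '' ((𝔭 i : Set (𝓞 K)))) :
        Ideal (Polynomial (𝓞 K))) ^ (z i))
    (hbound : ∀ m : 𝓞 K, Real.sqrt (∑ φ : K →+* ℂ, ‖φ (m : K)‖ ^ 2) ≤ B →
        Real.sqrt (∑ φ : K →+* ℂ, ‖φ ((c.eval m : 𝓞 K) : K)‖ ^ 2) < F)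
    (m : 𝓞 K) (hm : Real.sqrt (∑ φ : K →+* ℂ, ‖φ (m : K)‖ ^ 2) ≤ B)
    (hagree : ∑ i, ((if m - r i ∈ 𝔭 i then 1 else 0 : ℝ)) * (z i) *
          Real.log (Ideal.absNorm (𝔭 i)) >
        -(Module.finrank ℚ K : ℝ) / 2 * Real.log (Module.finrank ℚ K) +
          (Module.finrank ℚ K : ℝ) * Real.log F) :
    c.eval m = 0 := by
  by_contra hx
  have hmem := eval_mem_prod_pow_of_mem_prod_span_pow univ 𝔭 r z hc m
  have hlower := Ideal.sum_mul_log_absNorm_le_log_absNorm univ 𝔭 _ hx hmem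
  have hupper := log_abs_norm_lt_of_t2Norm_lt (RingOfIntegers.coe_ne_zero_iff.mpr hx)
    (hbound m hm)
  rw [← absNorm_span_singleton_eq_abs_norm] at hupper
  have hweights : ∑ i, (if m - r i ∈ 𝔭 i then 1 else 0 : ℝ) * z i * log (Ideal.absNorm (𝔭 i)) =
      ∑ i, ((if m - r i ∈ 𝔭 i then z i else 0 : ℕ) : ℝ) * log (Ideal.absNorm (𝔭 i)) :=
    sum_congr rfl fun i _ => by split_ifs <;> simp
  linarith

/-- Let `𝔭 1, …, 𝔭 n` be distinct nonzero primes of `𝓞 K`, `z i ≥ 0`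
integers, `r i ∈ 𝓞 K`, and `c ∈ ∏ i, (J i)^(z i)` (with `J i = (y − r i, 𝔭 i)`) a
polynomial such that `‖c(m)‖ < F` whenever `‖m‖ ≤ B`. Then any `m ∈ 𝓞 K` with
`‖m‖ ≤ B` whose agreement weights `a i` (`a i = 1` if `m ≡ r i mod 𝔭 i`, else `0`)
satisfy `Σ i, a i · z i · log N(𝔭 i) > −(d/2)·log d + d·log F` is a root of `c`. -/
theorem eval_eq_zero_of_weighted_agreement
    (K : Type*) [Field K] [NumberField K]
    (n : ℕ) (𝔭 : Fin n → Ideal (𝓞 K)) (hprime : ∀ i, (𝔭 i).IsPrime)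
    (hne : ∀ i, 𝔭 i ≠ ⊥) (hdist : Function.Injective 𝔭)
    (r : Fin n → 𝓞 K) (z : Fin n → ℕ) (B F : ℝ)
    (c : Polynomial (𝓞 K))
    (hc : c ∈ ∏ i, (Ideal.span ({X - C (r i)} ∪ C '' ((𝔭 i : Set (𝓞 K)))) :
        Ideal (Polynomial (𝓞 K))) ^ (z i))
    (hbound : ∀ m : 𝓞 K, Real.sqrt (∑ φ : K →+* ℂ, ‖φ (m : K)‖ ^ 2) ≤ B →
        Real.sqrt (∑ φ : K →+* ℂ, ‖φ ((c.eval m : 𝓞 K) : K)‖ ^ 2) < F)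
    (m : 𝓞 K) (hm : Real.sqrt (∑ φ : K →+* ℂ, ‖φ (m : K)‖ ^ 2) ≤ B)
    (hagree : ∑ i, ((if m - r i ∈ 𝔭 i then 1 else 0 : ℝ)) * (z i) *
          Real.log (Ideal.absNorm (𝔭 i)) >
        -(Module.finrank ℚ K : ℝ) / 2 * Real.log (Module.finrank ℚ K) +
          (Module.finrank ℚ K : ℝ) * Real.log F) :
    c.eval m = 0 :=
  eval_eq_zero_of_weighted_agreement_general K n 𝔭 r z B F c hc hbound m hm hagree
end

section
/- Let 𝔭₁,…,𝔭_n be distinct nonzero primes of O_K, J_i = (y − rᵢ, 𝔭ᵢ) ⊆ O_K[y], and zᵢ ≥ 0 integers. Let M be the O_K-module of polynomials in O_K[y] of degree at most l. Then M ∩ J_i^{zᵢ} contains the O_K-module ⨁_{j=0}^{z̃ᵢ} 𝔭ᵢ^{zᵢ−j}·(y−rᵢ)^j ⊕ ⨁_{j=1}^{l−zᵢ} O_K·y^j(y−rᵢ)^{zᵢ}, where z̃ᵢ = min(zᵢ, l) and the second sum is empty if zᵢ > l. -/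
/-!
Both conditions, degree at most `l` and membership in `J ^ z`, cut out `𝓞 K`-submodules, so it
suffices to check the generators. For `a ∈ 𝔭 ^ (z - j)` we have `C a ∈ J ^ (z - j)` and
`(y - r) ^ j ∈ J ^ j`, whence `C a * (y - r) ^ j ∈ J ^ z`; the generators `y ^ j * (y - r) ^ z`
are multiples of `(y - r) ^ z ∈ J ^ z`.
-/

open NumberField Polynomial

namespace Polynomial

section Ring

variable {R : Type*} [Ring R]

theorem natDegree_X_sub_C_pow_le (r : R) (k : ℕ) : ((X - C r) ^ k).natDegree ≤ k :=
  natDegree_pow_le.trans (by simpa using Nat.mul_le_mul_left k (natDegree_X_sub_C_le r))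

theorem natDegree_C_mul_X_sub_C_pow_le (a r : R) (j : ℕ) : (C a * (X - C r) ^ j).natDegree ≤ j :=
  (natDegree_C_mul_le a _).trans (natDegree_X_sub_C_pow_le r j)

theorem natDegree_X_pow_mul_X_sub_C_pow_le (r : R) (j k : ℕ) :
    (X ^ j * (X - C r) ^ k).natDegree ≤ j + k :=
  natDegree_mul_le.trans (add_le_add (natDegree_X_pow_le j) (natDegree_X_sub_C_pow_le r k))

end Ring

section CommRing

variable {R : Type*} [CommRing R]

theorem C_mem_span_X_sub_C_union_pow (I : Ideal R) (r : R) {a : R} {k : ℕ} (ha : a ∈ I ^ k) :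
    C a ∈ Ideal.span ({X - C r} ∪ C '' (I : Set R)) ^ k := by
  have hmap : I.map C ≤ Ideal.span ({X - C r} ∪ C '' (I : Set R)) :=
    Ideal.map_le_iff_le_comap.mpr fun a ha => Ideal.subset_span (Or.inr ⟨a, ha, rfl⟩)
  have hCa : C a ∈ (I ^ k).map C := Ideal.mem_map_of_mem C ha
  rw [Ideal.map_pow] at hCa
  exact Ideal.pow_right_mono hmap k hCa

theorem X_sub_C_pow_mem_span_X_sub_C_union_pow (I : Ideal R) (r : R) (k : ℕ) :
    (X - C r) ^ k ∈ Ideal.span ({X - C r} ∪ C '' (I : Set R)) ^ k :=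
  Ideal.pow_mem_pow (Ideal.subset_span (Set.mem_union_left _ (Set.mem_singleton _))) k

theorem C_mul_X_sub_C_pow_mem_span_X_sub_C_union_pow (I : Ideal R) (r : R) {a : R} {j z : ℕ}
    (hjz : j ≤ z) (ha : a ∈ I ^ (z - j)) :
    C a * (X - C r) ^ j ∈ Ideal.span ({X - C r} ∪ C '' (I : Set R)) ^ z := by
  rw [← Nat.sub_add_cancel hjz, pow_add]
  exact Ideal.mul_mem_mul (C_mem_span_X_sub_C_union_pow I r ha)
    (X_sub_C_pow_mem_span_X_sub_C_union_pow I r j)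

end CommRing

end Polynomial

theorem pseudo_generators_subset_inter_general
    (K : Type*) [Field K]
    (𝔭 : Ideal (𝓞 K))
    (r : 𝓞 K) (z l : ℕ) (c : Polynomial (𝓞 K))
    (hc : c ∈ Submodule.span (𝓞 K)
      ((⋃ j ∈ Finset.range (min z l + 1),
          (fun a : 𝓞 K => Polynomial.C a * (X - C r) ^ j) '' ((𝔭 ^ (z - j) : Ideal (𝓞 K)) : Set (𝓞 K)))
        ∪ (⋃ j ∈ Finset.Icc 1 (l - z), {X ^ j * (X - C r) ^ z}))) :
    c.natDegree ≤ l ∧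
      c ∈ (Ideal.span ({X - C r} ∪ C '' ((𝔭 : Set (𝓞 K)))) : Ideal (Polynomial (𝓞 K))) ^ z := by
  suffices hle : Submodule.span (𝓞 K) _ ≤ degreeLE (𝓞 K) l ⊓
      (Ideal.span ({X - C r} ∪ C '' ((𝔭 : Set (𝓞 K)))) ^ z).restrictScalars (𝓞 K) by
    obtain ⟨hdeg, hJ⟩ := hle hc
    exact ⟨natDegree_le_iff_degree_le.mpr (mem_degreeLE.mp hdeg), hJ⟩
  refine Submodule.span_le.mpr ?_
  rintro p (hp | hp)
  · simp only [Set.mem_iUnion, Set.mem_image, Finset.mem_range, Nat.lt_succ_iff, le_min_iff] at hp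
    obtain ⟨j, ⟨hjz, hjl⟩, a, ha, rfl⟩ := hp
    refine ⟨mem_degreeLE.mpr (natDegree_le_iff_degree_le.mp ?_),
      C_mul_X_sub_C_pow_mem_span_X_sub_C_union_pow 𝔭 r hjz ha⟩
    exact (natDegree_C_mul_X_sub_C_pow_le a r j).trans hjl
  · simp only [Set.mem_iUnion, Set.mem_singleton_iff, Finset.mem_Icc] at hp
    obtain ⟨j, ⟨hj1, hjl⟩, rfl⟩ := hp
    refine ⟨mem_degreeLE.mpr (natDegree_le_iff_degree_le.mp ?_),
      Ideal.mul_mem_left _ _ (X_sub_C_pow_mem_span_X_sub_C_union_pow 𝔭 r z)⟩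
    exact (natDegree_X_pow_mul_X_sub_C_pow_le r j z).trans (by omega)

/-- Let `𝔭` be a nonzero prime of `𝓞 K`, `J = (y − r, 𝔭) ⊆ 𝓞 K[y]`,
`z ≥ 0` an integer, and `M` the `𝓞 K`-module of polynomials of degree at most `l`.
Then `M ∩ J^z` contains the `𝓞 K`-module
`⨁_{j=0}^{min(z,l)} 𝔭^(z−j)·(y−r)^j ⊕ ⨁_{j=1}^{l−z} 𝓞 K·y^j(y−r)^z`
(the second sum being empty if `z > l`). -/
theorem pseudo_generators_subset_inter
    (K : Type*) [Field K] [NumberField K]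
    (𝔭 : Ideal (𝓞 K)) (hprime : 𝔭.IsPrime) (hne : 𝔭 ≠ ⊥)
    (r : 𝓞 K) (z l : ℕ) (c : Polynomial (𝓞 K))
    (hc : c ∈ Submodule.span (𝓞 K)
      ((⋃ j ∈ Finset.range (min z l + 1),
          (fun a : 𝓞 K => Polynomial.C a * (X - C r) ^ j) '' ((𝔭 ^ (z - j) : Ideal (𝓞 K)) : Set (𝓞 K)))
        ∪ (⋃ j ∈ Finset.Icc 1 (l - z), {X ^ j * (X - C r) ^ z}))) :
    c.natDegree ≤ l ∧
      c ∈ (Ideal.span ({X - C r} ∪ C '' ((𝔭 : Set (𝓞 K)))) : Ideal (Polynomial (𝓞 K))) ^ z :=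
  pseudo_generators_subset_inter_general K 𝔭 r z l c hc
end
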